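/- Every L-typeable term with de Bruijn indices is affine: if t : ℓ is derivable, then each de Bruijn index variable-occurrence of t is bound by at most one occurrence per binder; concretely, the multiset of free indices of t (computed with the standard shift-by-one under λ) has no repeated elements and equals ℓ as a set. -/

import Mathlib

/-- Partial merge of lists of naturals, failing on equal heads. -/
def merge : List ℕ → List ℕ → Option (List ℕ)
  | [], l => some l
  | i :: l, [] => some (i :: l)
  | i₁ :: l₁, i₂ :: l₂ =>
    if i₁ < i₂ then (merge l₁ (i₂ :: l₂)).map (i₁ :: ·)
    else if i₂ < i₁ then (merge (i₁ :: l₁) l₂).map (i₂ :: ·)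
    else none
termination_by l₁ l₂ => l₁.length + l₂.length

/-- λ-terms with de Bruijn indices. -/
inductive Tm : Type
  | ind : ℕ → Tm
  | lam : Tm → Tm
  | app : Tm → Tm → Tm

/-- The L-type system. -/
inductive LTy : Tm → List ℕ → Prop
  | ind (i : ℕ) : LTy (.ind i) [i]
  | abs {t : Tm} {ℓ : List ℕ} :
      LTy t (0 :: ℓ) → (∀ x ∈ ℓ, 0 < x) → LTy (.lam t) (ℓ.map (· - 1))
  | app {t₁ t₂ : Tm} {ℓ₁ ℓ₂ ℓ : List ℕ} :
      LTy t₁ ℓ₁ → LTy t₂ ℓ₂ → merge ℓ₁ ℓ₂ = some ℓ → LTy (.app t₁ t₂) ℓ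

/-- The list of free de Bruijn indices of a term. -/
def FI : Tm → List ℕ
  | .ind n => [n]
  | .lam t => (FI t).filterMap (fun n => if n = 0 then none else some (n - 1))
  | .app t₁ t₂ => FI t₁ ++ FI t₂


theorem merge_perm : ∀ l₁ l₂ l : List ℕ, merge l₁ l₂ = some l → l.Perm (l₁ ++ l₂) := by
  intro l₁ l₂
  induction l₁, l₂ using merge.induct with
  | case1 l => intro l' h; simp [merge] at h; simp [h.symm]
  | case2 i l => intro l' h; simp [merge] at h; simp [h.symm]
  | case3 i₁ l₁ i₂ l₂ hlt ih =>
    intro l' h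
    rw [merge, if_pos hlt] at h
    obtain ⟨m, hm, rfl⟩ := Option.map_eq_some_iff.mp h
    simpa using (ih m hm).cons i₁
  | case4 i₁ l₁ i₂ l₂ hnlt hlt ih =>
    intro l' h
    rw [merge, if_neg hnlt, if_pos hlt] at h
    obtain ⟨m, hm, rfl⟩ := Option.map_eq_some_iff.mp h
    exact ((ih m hm).cons i₂).trans List.perm_middle.symm
  | case5 i₁ l₁ i₂ l₂ h1 h2 =>
    intro l' h
    rw [merge, if_neg h1, if_neg h2] at h
    exact absurd h (by simp)

theorem merge_sorted : ∀ l₁ l₂ l : List ℕ, merge l₁ l₂ = some l →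
    l₁.Pairwise (· < ·) → l₂.Pairwise (· < ·) → l.Pairwise (· < ·) := by
  intro l₁ l₂
  induction l₁, l₂ using merge.induct with
  | case1 l => intro l' h _ h2; simp [merge] at h; exact h ▸ h2
  | case2 i l => intro l' h h1 _; simp [merge] at h; exact h ▸ h1
  | case3 i₁ l₁ i₂ l₂ hlt ih =>
    intro l' h h1 h2
    rw [merge, if_pos hlt] at h
    obtain ⟨m, hm, rfl⟩ := Option.map_eq_some_iff.mp h
    rw [List.pairwise_cons]
    refine ⟨?_, ih m hm (List.pairwise_cons.mp h1).2 h2⟩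
    intro b hb
    have := (merge_perm _ _ _ hm).mem_iff.mp hb
    rcases List.mem_append.mp this with hb | hb
    · exact (List.pairwise_cons.mp h1).1 b hb
    · rcases List.mem_cons.mp hb with rfl | hb
      · exact hlt
      · exact hlt.trans ((List.pairwise_cons.mp h2).1 b hb)
  | case4 i₁ l₁ i₂ l₂ hnlt hlt ih =>
    intro l' h h1 h2
    rw [merge, if_neg hnlt, if_pos hlt] at h
    obtain ⟨m, hm, rfl⟩ := Option.map_eq_some_iff.mp h
    rw [List.pairwise_cons]
    refine ⟨?_, ih m hm h1 (List.pairwise_cons.mp h2).2⟩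
    intro b hb
    have := (merge_perm _ _ _ hm).mem_iff.mp hb
    rcases List.mem_append.mp this with hb | hb
    · rcases List.mem_cons.mp hb with rfl | hb
      · exact hlt
      · exact hlt.trans ((List.pairwise_cons.mp h1).1 b hb)
    · exact (List.pairwise_cons.mp h2).1 b hb
  | case5 i₁ l₁ i₂ l₂ h1 h2 =>
    intro l' h
    rw [merge, if_neg h1, if_neg h2] at h
    exact absurd h (by simp)

theorem fm_eq : ∀ l : List ℕ, (∀ x ∈ l, 0 < x) →
    l.filterMap (fun n => if n = 0 then none else some (n - 1)) = l.map (· - 1) := by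
  intro l hpos
  induction l with
  | nil => rfl
  | cons a l ihl =>
    rw [List.filterMap_cons, List.map_cons, if_neg (hpos a (by simp)).ne',
      ihl (fun x hx => hpos x (by simp [hx]))]

theorem LT_key {t : Tm} {ℓ : List ℕ} (h : LTy t ℓ) :
    (FI t).Perm ℓ ∧ ℓ.Pairwise (· < ·) := by
  induction h with
  | ind i => exact ⟨List.Perm.refl _, List.pairwise_singleton _ i⟩
  | abs h hpos ih =>
    rename_i t ℓ
    obtain ⟨hp, hs⟩ := ih
    have key : List.filterMap (fun n => if n = 0 then none else some (n - 1)) (0 :: ℓ)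
        = ℓ.map (· - 1) := by
      rw [List.filterMap_cons, if_pos rfl, fm_eq ℓ hpos]
    constructor
    · show ((FI t).filterMap _).Perm _
      exact (hp.filterMap _).trans (by rw [key])
    · have hs' := (List.pairwise_cons.mp hs).2
      apply List.pairwise_map.mpr
      exact hs'.imp_of_mem (fun {a b} ha hb hab => Nat.sub_lt_sub_right (hpos a ha) hab)
  | app h1 h2 hm ih1 ih2 =>
    obtain ⟨p1, s1⟩ := ih1
    obtain ⟨p2, s2⟩ := ih2
    exact ⟨((p1.append p2).trans (merge_perm _ _ _ hm).symm),
      merge_sorted _ _ _ hm s1 s2⟩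

theorem LT_affine {t : Tm} {ℓ : List ℕ} (h : LTy t ℓ) :
    (FI t).Nodup ∧ ∀ n, n ∈ FI t ↔ n ∈ ℓ := by
  obtain ⟨hp, hs⟩ := LT_key h
  exact ⟨hp.nodup_iff.mpr hs.nodup, fun n => hp.mem_iff⟩
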